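/- Let G' be a directed graph on n vertices, let β ≥ 8 be an integer, and fix a consistent system of shortest paths on G' with path set Π. Then there exists a finite family (q_1, q_1*), …, (q_k, q_k*) such that: each q_i ∈ Π has at most ⌊β/4⌋ vertices; each q_i* is a subset of the vertices of q_i with |q_i*| ≥ β/8; the sets q_1*, …, q_k* are pairwise disjoint (hence k ≤ 8n/β); the union of the vertex sets of the paths q_1, …, q_k equals the union of the sets q_1*, …, q_k*; and every path π ∈ Π with at most ⌊β/4⌋ vertices has fewer than β/8 vertices outside the union of q_1*, …, q_k*. -/

import Mathlib

open scoped Classical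

/-- An edge of a directed graph on vertex set `Fin n`. -/
abbrev Edge (n : ℕ) := Fin n × Fin n

/-- `l` is a directed path in the graph with edge set `E`:
a sequence of distinct vertices, each consecutive pair joined by an edge. -/
def IsPathList {n : ℕ} (E : Set (Edge n)) (l : List (Fin n)) : Prop :=
  l.Nodup ∧ l.Chain' (fun a b => (a, b) ∈ E)

/-- `l` is a directed path from `u` to `v` in the graph with edge set `E`. -/
def IsPathFromTo {n : ℕ} (E : Set (Edge n)) (u v : Fin n) (l : List (Fin n)) : Prop :=
  IsPathList E l ∧ l.head? = some u ∧ l.getLast? = some v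

/-- `hdist E u v` is the minimum number of edges on a directed path from `u` to `v`
(`⊤` if no such path exists). -/
noncomputable def hdist {n : ℕ} (E : Set (Edge n)) (u v : Fin n) : ℕ∞ :=
  sInf {k : ℕ∞ | ∃ l : List (Fin n), IsPathFromTo E u v l ∧ (l.length : ℕ∞) = k + 1}

/-- `(u, v)` is in the transitive closure: `u ≠ v` and `v` is reachable from `u`. -/
def TCrel {n : ℕ} (E : Set (Edge n)) (u v : Fin n) : Prop :=
  u ≠ v ∧ ∃ l : List (Fin n), IsPathFromTo E u v l

/-- The transitive closure of the graph with edge set `E`, as a set of pairs. -/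
def TCset {n : ℕ} (E : Set (Edge n)) : Set (Edge n) := {p | TCrel E p.1 p.2}

/-- `H` is a shortcut set with hopbound `β` for the graph with edge set `E`. -/
def IsShortcutSet {n : ℕ} (E H : Set (Edge n)) (β : ℕ) : Prop :=
  H ⊆ TCset E ∧ ∀ p ∈ TCset E, hdist (E ∪ H) p.1 p.2 ≤ (β : ℕ∞)

/-!
Greedy construction: as long as some path of `Π` with at most `⌊β/4⌋` vertices has at least
`β/8` vertices not yet covered, select it and let `q*` be its uncovered vertices. The covered
set grows strictly at each step, so the process stops, and it stops exactly when every short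
path has fewer than `β/8` uncovered vertices. The `q*` are disjoint of size at least `β/8`,
whence `k · β/8 ≤ n`.
-/

open Finset Function

section GreedyCover

variable {ι α : Type*} [DecidableEq α] (V : ι → Finset α) (P : Set ι) (r : ℝ)

/-- Relative to a set `C` of vertices counted as covered already, so that one greedy step is a
recursive call with a larger `C`. -/
structure IsGreedyCover (C : Finset α) {k : ℕ} (q : Fin k → ι) (qs : Fin k → Finset α) :
    Prop where
  mem : ∀ i, q i ∈ P
  subset : ∀ i, qs i ⊆ V (q i)
  le_card : ∀ i, r ≤ #(qs i)
  disjoint : ∀ i, Disjoint (qs i) C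
  pairwise_disjoint : Pairwise (Disjoint on qs)
  subset_union_biUnion : ∀ i, V (q i) ⊆ C ∪ univ.biUnion qs
  card_sdiff_lt : ∀ p ∈ P, (#(V p \ (C ∪ univ.biUnion qs)) : ℝ) < r

variable {V P r}

theorem isGreedyCover_zero {C : Finset α} (h : ∀ p ∈ P, (#(V p \ C) : ℝ) < r) :
    IsGreedyCover V P r C (Fin.elim0 : Fin 0 → ι) Fin.elim0 where
  mem := nofun
  subset := nofun
  le_card := nofun
  disjoint := nofun
  pairwise_disjoint := nofun
  subset_union_biUnion := nofun
  card_sdiff_lt := by simpa using h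

theorem union_biUnion_cons {k : ℕ} (C D : Finset α) (qs : Fin k → Finset α) :
    C ∪ univ.biUnion (Fin.cons (D \ C) qs : Fin (k + 1) → Finset α) =
      C ∪ D ∪ univ.biUnion qs := by
  ext x
  simp only [mem_union, mem_biUnion, mem_univ, true_and, Fin.exists_fin_succ, Fin.cons_zero,
    Fin.cons_succ, mem_sdiff]
  tauto

theorem IsGreedyCover.cons {C : Finset α} {k : ℕ} {q : Fin k → ι} {qs : Fin k → Finset α} {p : ι}
    (h : IsGreedyCover V P r (C ∪ V p) q qs) (hp : p ∈ P) (hr : r ≤ #(V p \ C)) :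
    IsGreedyCover V P r C (Fin.cons p q) (Fin.cons (V p \ C) qs) where
  mem := Fin.cases hp h.mem
  subset := Fin.cases sdiff_subset h.subset
  le_card := Fin.cases hr h.le_card
  disjoint := Fin.cases sdiff_disjoint fun i => (h.disjoint i).mono_right subset_union_left
  pairwise_disjoint := by
    refine pairwise_fin_succ_iff.mpr ⟨fun i => ?_, fun i => ?_, h.pairwise_disjoint⟩
    · exact ((h.disjoint i).mono_right (sdiff_subset.trans subset_union_right))
    · exact ((h.disjoint i).mono_right (sdiff_subset.trans subset_union_right)).symm
  subset_union_biUnion := by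
    rw [union_biUnion_cons]
    exact Fin.cases (subset_union_right.trans subset_union_left) h.subset_union_biUnion
  card_sdiff_lt := by
    rw [union_biUnion_cons]
    exact h.card_sdiff_lt

theorem exists_isGreedyCover [Fintype α] (V : ι → Finset α) (P : Set ι) {r : ℝ} (hr : 0 < r)
    (C : Finset α) : ∃ (k : ℕ) (q : Fin k → ι) (qs : Fin k → Finset α),
      IsGreedyCover V P r C q qs := by
  by_cases h : ∃ p ∈ P, r ≤ #(V p \ C)
  · obtain ⟨p, hp, hpr⟩ := h
    obtain ⟨x, hx⟩ : (V p \ C).Nonempty := card_pos.mp (by exact_mod_cast hr.trans_le hpr)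
    have hgrow : C ⊂ C ∪ V p := (ssubset_iff_of_subset subset_union_left).mpr
      ⟨x, mem_union_right C (mem_sdiff.mp hx).1, (mem_sdiff.mp hx).2⟩
    have : #(C ∪ V p)ᶜ < #Cᶜ := card_lt_card (compl_ssubset_compl.mpr hgrow)
    obtain ⟨k, q, qs, hcover⟩ := exists_isGreedyCover V P hr (C ∪ V p)
    exact ⟨k + 1, _, _, hcover.cons hp hpr⟩
  · push Not at h
    exact ⟨0, _, _, isGreedyCover_zero h⟩
termination_by #Cᶜ
decreasing_by simpa using this

theorem IsGreedyCover.biUnion_eq {k : ℕ} {q : Fin k → ι} {qs : Fin k → Finset α}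
    (h : IsGreedyCover V P r ∅ q qs) : univ.biUnion (V ∘ q) = univ.biUnion qs := by
  refine (biUnion_subset.mpr fun i _ => ?_).antisymm (biUnion_mono fun i _ => h.subset i)
  simpa using h.subset_union_biUnion i

end GreedyCover

theorem Finset.card_mul_le_card_of_pairwise_disjoint {κ α : Type*} [Fintype κ] [Fintype α]
    [DecidableEq α] {s : κ → Finset α} (hs : Pairwise (Disjoint on s)) {r : ℝ}
    (hr : ∀ i, r ≤ #(s i)) : Fintype.card κ * r ≤ Fintype.card α :=
  calc Fintype.card κ * r = ∑ _ : κ, r := by simp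
    _ ≤ ∑ i, (#(s i) : ℝ) := sum_le_sum fun i _ => hr i
    _ = #(univ.biUnion s) := by
      rw [card_biUnion fun i _ j _ hij => hs hij]
      push_cast
      rfl
    _ ≤ Fintype.card α := by exact_mod_cast card_le_univ _

/-- **path covers.** Let `G'` be a directed graph on `n` vertices, `β ≥ 8`
an integer, and fix a consistent system of shortest paths `sp` (with path set `Π`). Then
there is a finite family `(q₁, q₁*), …, (q_k, q_k*)` such that: each `qᵢ ∈ Π` has at most
`⌊β/4⌋` vertices; each `qᵢ*` is a subset of the vertices of `qᵢ` with `|qᵢ*| ≥ β/8`; the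
sets `qᵢ*` are pairwise disjoint (hence `k ≤ 8n/β`); the union of the vertex sets of the
`qᵢ` equals the union of the `qᵢ*`; and every path of `Π` with at most `⌊β/4⌋` vertices
has fewer than `β/8` vertices outside the union of the `qᵢ*`. -/
theorem path_cover_exists :
    ∀ (n : ℕ) (E' : Set (Edge n)) (β : ℕ), 8 ≤ β →
      ∀ sp : Fin n → Fin n → List (Fin n),
        -- `sp s t` is a shortest `s`–`t` path for every `(s,t) ∈ TC(G')`
        (∀ s t : Fin n, TCrel E' s t → IsPathFromTo E' s t (sp s t) ∧
          ∀ l : List (Fin n), IsPathFromTo E' s t l → (sp s t).length ≤ l.length) →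
        -- the system is consistent: if `u` occurs before `v` on `sp s t`, then
        -- `sp u v` equals the corresponding subpath of `sp s t`
        (∀ s t : Fin n, TCrel E' s t → ∀ i j : ℕ, i < j →
          ∀ u v : Fin n, (sp s t)[i]? = some u → (sp s t)[j]? = some v →
            sp u v = ((sp s t).drop i).take (j - i + 1)) →
        ∃ (k : ℕ) (q : Fin k → List (Fin n)) (qs : Fin k → Set (Fin n)),
          (∀ i : Fin k, ∃ s t : Fin n, TCrel E' s t ∧ q i = sp s t) ∧
          (∀ i : Fin k, (q i).length ≤ β / 4) ∧
          (∀ i : Fin k, qs i ⊆ {x : Fin n | x ∈ q i}) ∧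
          (∀ i : Fin k, ((qs i).ncard : ℝ) ≥ (β : ℝ) / 8) ∧
          (∀ i j : Fin k, i ≠ j → Disjoint (qs i) (qs j)) ∧
          ((k : ℝ) ≤ 8 * n / β) ∧
          ({x : Fin n | ∃ i : Fin k, x ∈ q i} = {x : Fin n | ∃ i : Fin k, x ∈ qs i}) ∧
          (∀ s t : Fin n, TCrel E' s t → (sp s t).length ≤ β / 4 →
            ({x : Fin n | x ∈ sp s t ∧ ∀ i : Fin k, x ∉ qs i}.ncard : ℝ) <
              (β : ℝ) / 8) := by
  intro n E' β hβ sp _ _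
  have hβ8 : (0 : ℝ) < β / 8 := by positivity
  obtain ⟨k, q, qs, h⟩ := exists_isGreedyCover List.toFinset
    {l | ∃ s t, TCrel E' s t ∧ l = sp s t ∧ l.length ≤ β / 4} hβ8 ∅
  refine ⟨k, q, fun i => qs i, fun i => ?_, fun i => ?_, fun i x hx => ?_, fun i => ?_,
    fun i j hij => ?_, ?_, ?_, fun s t hst hlen => ?_⟩
  · obtain ⟨s, t, hst, hq, -⟩ := h.mem i
    exact ⟨s, t, hst, hq⟩
  · obtain ⟨-, -, -, -, hlen⟩ := h.mem i
    exact hlen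
  · exact List.mem_toFinset.mp (h.subset i hx)
  · simpa using h.le_card i
  · exact disjoint_coe.mpr (h.pairwise_disjoint hij)
  · have := card_mul_le_card_of_pairwise_disjoint h.pairwise_disjoint h.le_card
    rw [Fintype.card_fin, Fintype.card_fin] at this
    rw [le_div_iff₀ (by positivity)]
    linarith
  · ext x
    simpa using congrArg (x ∈ ·) h.biUnion_eq
  · have hlt := h.card_sdiff_lt (sp s t) ⟨s, t, hst, rfl, hlen⟩
    convert hlt using 2
    rw [← Set.ncard_coe_finset]
    congr 1
    ext x
    simp
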